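/- Solutions of a first-order linear system on the superline are determined by their even initial value: let k ≥ 1, let Γ be a k×k matrix with entries in A, and fix x₀ ∈ ℝ. Write ψ ∈ A^k as ψ = ψ⁰ + ξψ¹ with ψ⁰, ψ¹ vectors of smooth functions ℝ → ℝ^k. Then the ℝ-linear evaluation map ψ ↦ ψ⁰(x₀) is a bijection from the solution space {ψ ∈ A^k : Dψ = Γψ} (D and the matrix multiplication applied componentwise in A) onto ℝ^k: every solution is uniquely determined by ψ⁰(x₀), and every value in ℝ^k occurs as ψ⁰(x₀) for some solution. -/

import Mathlib

noncomputable section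
set_option synthInstance.maxHeartbeats 1000000
set_option maxHeartbeats 1000000

open TrivSqZeroExt

/-- Smooth real functions on the line, as a subalgebra of `ℝ → ℝ`. -/
def SmoothR : Subalgebra ℝ (ℝ → ℝ) where
  carrier := {f | ContDiff ℝ (⊤ : ℕ∞) f}
  mul_mem' := fun {a b} (ha : ContDiff ℝ (⊤ : ℕ∞) a) (hb : ContDiff ℝ (⊤ : ℕ∞) b) => ha.mul hb
  add_mem' := fun {a b} (ha : ContDiff ℝ (⊤ : ℕ∞) a) (hb : ContDiff ℝ (⊤ : ℕ∞) b) => ha.add hb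
  algebraMap_mem' := fun c => show ContDiff ℝ (⊤ : ℕ∞) (fun _ => c) from contDiff_const

lemma SmoothR.contDiff (f : SmoothR) : ContDiff ℝ (⊤ : ℕ∞) (f : ℝ → ℝ) := f.2

lemma SmoothR.differentiable (f : SmoothR) : Differentiable ℝ (f : ℝ → ℝ) :=
  (SmoothR.contDiff f).differentiable (by first | simp | decide)

/-- The ring `A` of superline functions: `f = f₀ + ξ f₁`. -/
abbrev SuperA : Type := TrivSqZeroExt SmoothR SmoothR


/-- Differentiation `f ↦ f′` on smooth functions, as an ℝ-linear map. -/
def derivSm : SmoothR →ₗ[ℝ] SmoothR where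
  toFun f := ⟨deriv (f : ℝ → ℝ), (contDiff_infty_iff_deriv.mp (SmoothR.contDiff f)).2⟩
  map_add' f g := by
    ext x
    exact deriv_add ((SmoothR.differentiable f) x) ((SmoothR.differentiable g) x)
  map_smul' c f := by
    ext x
    have h := deriv_const_smul (f := (f : ℝ → ℝ)) c ((SmoothR.differentiable f) x)
    have : deriv (c • (f : ℝ → ℝ)) x = c • deriv (f : ℝ → ℝ) x := by
      simpa [Pi.smul_def] using h
    simp_all

/-- The odd vector field `D = ∂_ξ + ξ ∂_x`, i.e. `D(f₀ + ξ f₁) = f₁ + ξ f₀′`. -/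
def D : Module.End ℝ SuperA where
  toFun f := inl (snd f) + inr (derivSm (fst f))
  map_add' f g := by apply TrivSqZeroExt.ext <;> simp
  map_smul' c f := by apply TrivSqZeroExt.ext <;> simp

/-- Multiplication by `a ∈ A` as an ℝ-linear endomorphism of `A`. -/
def mulOp (a : SuperA) : Module.End ℝ SuperA := LinearMap.mulLeft ℝ a

/-- `L` is a differential operator on the superline of order `≤ m`:
`L = a_m D^m + ⋯ + a₀`. -/
def IsOpOfOrderLE (L : Module.End ℝ SuperA) (m : ℕ) : Prop :=
  ∃ a : Fin (m + 1) → SuperA, L = ∑ i : Fin (m + 1), mulOp (a i) * D ^ (i : ℕ)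

/-- `L` is a differential operator on the superline (of some order). -/
def IsDiffOp (L : Module.End ℝ SuperA) : Prop := ∃ m, IsOpOfOrderLE L m

/-- `L` is a differential operator of order `< m` (i.e. of order `≤ m − 1`;
for `m = 0` this means `L = 0`). -/
def IsOpOfOrderLT (L : Module.End ℝ SuperA) (m : ℕ) : Prop :=
  ∃ a : Fin m → SuperA, L = ∑ i : Fin m, mulOp (a i) * D ^ (i : ℕ)

/-- `L` is a nondegenerate operator of order `m`: the top coefficient `a_m`
is invertible in `A`. -/
def IsNondegOfOrder (L : Module.End ℝ SuperA) (m : ℕ) : Prop :=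
  ∃ a : Fin (m + 1) → SuperA, IsUnit (a (Fin.last m)) ∧
    L = ∑ i : Fin (m + 1), mulOp (a i) * D ^ (i : ℕ)

/-- `L` is a monic operator of order `m`: the top coefficient `a_m` equals `1`. -/
def IsMonicOfOrder (L : Module.End ℝ SuperA) (m : ℕ) : Prop :=
  ∃ a : Fin (m + 1) → SuperA, a (Fin.last m) = 1 ∧
    L = ∑ i : Fin (m + 1), mulOp (a i) * D ^ (i : ℕ)

/-- `f = f₀ + ξ f₁` is even iff `f₁ = 0`. -/
def SuperA.IsEven (f : SuperA) : Prop := snd f = 0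

/-- `f = f₀ + ξ f₁` is odd iff `f₀ = 0`. -/
def SuperA.IsOdd (f : SuperA) : Prop := fst f = 0

/-- `f = f₀ + ξ f₁` is constant iff `f₁ = 0` and `f₀` is a constant function. -/
def SuperA.IsConstant (f : SuperA) : Prop :=
  snd f = 0 ∧ ∃ c : ℝ, ∀ x : ℝ, ((fst f : SmoothR) : ℝ → ℝ) x = c

/-- The first-order operator `M_φ = D − (Dφ)φ⁻¹ = φ ∘ D ∘ φ⁻¹`. -/
def Mphi (φ : SuperA) : Module.End ℝ SuperA := D - mulOp (D φ * Ring.inverse φ)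


lemma sum_shuffle {R : Type*} [CommRing R] {k : ℕ} (a b : Fin k → Fin k → R)
    (f : Fin k → R) (i : Fin k) :
    ∑ j, ((∑ l, a i l * a l j) + b i j) * f j =
      ∑ j, (a i j * (∑ l, a j l * f l) + b i j * f j) := by
  simp only [add_mul, Finset.sum_add_distrib, Finset.sum_mul, Finset.mul_sum]
  congr 1
  rw [Finset.sum_comm]
  exact Finset.sum_congr rfl fun l _ => Finset.sum_congr rfl fun j _ => by ring

open Set Filter MeasureTheory intervalIntegral

lemma norm_mulVec_le {k : ℕ} (N : Matrix (Fin k) (Fin k) ℝ) (x : Fin k → ℝ) :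
    ‖N.mulVec x‖ ≤ (∑ i, ∑ j, |N i j|) * ‖x‖ := by
  have hnn : (0:ℝ) ≤ (∑ i, ∑ j, |N i j|) * ‖x‖ := by positivity
  rw [pi_norm_le_iff_of_nonneg hnn]
  intro i
  have h1 : ‖N.mulVec x i‖ ≤ ∑ j, |N i j| * ‖x‖ := by
    simp only [Matrix.mulVec, dotProduct, Real.norm_eq_abs]
    refine (Finset.abs_sum_le_sum_abs _ _).trans ?_
    refine Finset.sum_le_sum fun j _ => ?_
    rw [abs_mul]
    exact mul_le_mul_of_nonneg_left ((Real.norm_eq_abs _).symm ▸ norm_le_pi_norm x j) (abs_nonneg _)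
  refine h1.trans ?_
  rw [← Finset.sum_mul]
  refine mul_le_mul_of_nonneg_right ?_ (norm_nonneg _)
  exact Finset.single_le_sum (f := fun i => ∑ j, |N i j|)
    (fun i _ => Finset.sum_nonneg fun j _ => abs_nonneg _) (Finset.mem_univ i)

lemma abs_integral_abs_pow (m : ℕ) (x₀ t : ℝ) :
    |∫ s in x₀..t, |s - x₀| ^ m| = |t - x₀| ^ (m + 1) / (m + 1) := by
  have h := intervalIntegral.integral_comp_sub_right (a := x₀) (b := t) (fun u => |u| ^ m) x₀
  rw [h, sub_self]
  rcases le_or_gt 0 (t - x₀) with h0 | h0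
  · have : ∫ u in (0:ℝ)..(t - x₀), |u| ^ m = ∫ u in (0:ℝ)..(t - x₀), u ^ m := by
      refine intervalIntegral.integral_congr fun u hu => ?_
      rw [uIcc_of_le h0] at hu
      rw [abs_of_nonneg hu.1]
    rw [this, integral_pow, abs_of_nonneg h0, zero_pow (by omega), sub_zero,
      abs_of_nonneg (by positivity)]
  · have h1 : ∫ u in (0:ℝ)..(t - x₀), |u| ^ m = - ∫ u in (t - x₀)..(0:ℝ), |u| ^ m := by
      rw [intervalIntegral.integral_symm]
    have h2 : ∫ u in (t - x₀)..(0:ℝ), |u| ^ m = ∫ u in (t - x₀)..(0:ℝ), (-u) ^ m := by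
      refine intervalIntegral.integral_congr fun u hu => ?_
      rw [uIcc_of_le h0.le] at hu
      rw [abs_of_nonpos hu.2]
    have h3 : ∫ u in (t - x₀)..(0:ℝ), (-u) ^ m = ∫ u in (0:ℝ)..(-(t-x₀)), u ^ m := by
      have := intervalIntegral.integral_comp_neg (a := t - x₀) (b := 0) (fun u => u ^ m)
      simpa using this
    rw [h1, h2, h3, integral_pow, abs_neg, abs_of_neg h0, zero_pow (by omega), sub_zero,
      abs_of_nonneg (div_nonneg (pow_nonneg (by linarith) _) (by positivity))]

section ODE
variable {k : ℕ} {M : ℝ → Matrix (Fin k) (Fin k) ℝ}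

lemma cont_mulVec (hM : ∀ i j, Continuous fun t => M t i j) {g : ℝ → Fin k → ℝ}
    (hg : Continuous g) : Continuous fun s => (M s).mulVec (g s) := by
  apply continuous_pi; intro i
  simp only [Matrix.mulVec, dotProduct]
  exact continuous_finset_sum _ fun j _ => (hM i j).mul ((continuous_apply j).comp hg)

lemma exists_bound (hM : ∀ i j, Continuous fun t => M t i j) (a b : ℝ) :
    ∃ K : ℝ, 0 ≤ K ∧ ∀ s ∈ Set.Icc a b, (∑ i, ∑ j, |M s i j|) ≤ K := by
  have hρ : Continuous fun s => ∑ i, ∑ j, |M s i j| :=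
    continuous_finset_sum _ fun i _ => continuous_finset_sum _ fun j _ => (hM i j).abs
  obtain ⟨C, hC⟩ := isCompact_Icc.exists_bound_of_continuousOn hρ.continuousOn
  refine ⟨max C 0, le_max_right _ _, fun s hs => ?_⟩
  have h1 : ‖∑ i, ∑ j, |M s i j|‖ ≤ C := hC s hs
  rw [Real.norm_eq_abs] at h1
  exact le_trans (le_trans (le_abs_self _) h1) (le_max_left _ _)

lemma uIoc_subset_Icc' {x₀ T t : ℝ} (hT : 0 ≤ T) (ht : t ∈ Set.Icc (x₀ - T) (x₀ + T)) :
    Set.uIoc x₀ t ⊆ Set.Icc (x₀ - T) (x₀ + T) := by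
  have hx₀ : x₀ ∈ Set.Icc (x₀ - T) (x₀ + T) := ⟨by linarith, by linarith⟩
  exact fun s hs => (Set.uIcc_subset_Icc hx₀ ht) (Set.Ioc_subset_Icc_self hs)

lemma mem_Icc_of_abs {x₀ T t : ℝ} (h : |t - x₀| ≤ T) : t ∈ Set.Icc (x₀ - T) (x₀ + T) := by
  have := abs_le.mp h
  exact ⟨by linarith [this.1], by linarith [this.2]⟩

lemma abs_le_of_mem_Icc {x₀ T t : ℝ} (h : t ∈ Set.Icc (x₀ - T) (x₀ + T)) : |t - x₀| ≤ T :=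
  abs_le.mpr ⟨by linarith [h.1], by linarith [h.2]⟩

end ODE

set_option maxHeartbeats 1000000 in
noncomputable def picard {k : ℕ} (M : ℝ → Matrix (Fin k) (Fin k) ℝ) (x₀ : ℝ)
    (c : Fin k → ℝ) : ℕ → ℝ → Fin k → ℝ
  | 0 => fun _ => c
  | (n + 1) => fun t => c + ∫ s in x₀..t, (M s).mulVec (picard M x₀ c n s)

section ODE2
set_option maxHeartbeats 1000000
variable {k : ℕ} {M : ℝ → Matrix (Fin k) (Fin k) ℝ}

theorem linear_ODE_exists (hM : ∀ i j, ContDiff ℝ (⊤ : ℕ∞) fun t => M t i j)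
    (x₀ : ℝ) (c : Fin k → ℝ) :
    ∃ f : ℝ → (Fin k → ℝ), ContDiff ℝ (⊤ : ℕ∞) f ∧
      (∀ t, HasDerivAt f ((M t).mulVec (f t)) t) ∧ f x₀ = c := by
  classical
  have hMc : ∀ i j, Continuous fun t => M t i j := fun i j => (hM i j).continuous
  set u : ℕ → ℝ → Fin k → ℝ := picard M x₀ c with hu
  have hu0 : u 0 = fun _ => c := rfl
  have husucc : ∀ n, u (n + 1) = fun t => c + ∫ s in x₀..t, (M s).mulVec (u n s) :=
    fun n => rfl
  have hucont : ∀ n, Continuous (u n) := by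
    intro n; induction n with
    | zero => exact continuous_const
    | succ n ih =>
      rw [husucc]
      exact continuous_const.add (intervalIntegral.continuous_primitive
        (fun a b => (cont_mulVec hMc ih).intervalIntegrable a b) x₀)
  have key : ∀ K : ℝ, 0 ≤ K → ∀ T : ℝ, 0 ≤ T →
      (∀ s ∈ Set.Icc (x₀ - T) (x₀ + T), (∑ i, ∑ j, |M s i j|) ≤ K) →
      ∀ n, ∀ t ∈ Set.Icc (x₀ - T) (x₀ + T),
        ‖u (n + 1) t - u n t‖ ≤ ‖c‖ * (K * |t - x₀|) ^ (n + 1) / (n + 1).factorial := by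
    intro K hK T hT hKb n
    induction n with
    | zero =>
      intro t ht
      have hdt : u 1 t - u 0 t = ∫ s in x₀..t, (M s).mulVec c := by
        rw [husucc 0, hu0]
        simp
      have hb : ∀ s ∈ Set.uIoc x₀ t, ‖(M s).mulVec c‖ ≤ K * ‖c‖ := fun s hs =>
        (norm_mulVec_le _ _).trans
          (mul_le_mul_of_nonneg_right (hKb s (uIoc_subset_Icc' hT ht hs)) (norm_nonneg _))
      rw [hdt]
      refine (intervalIntegral.norm_integral_le_of_norm_le_const hb).trans_eq ?_
      simp [Nat.factorial]; ring
    | succ n ih =>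
      intro t ht
      have hint1 : IntervalIntegrable (fun s => (M s).mulVec (u (n + 1) s)) volume x₀ t :=
        (cont_mulVec hMc (hucont _)).intervalIntegrable _ _
      have hint0 : IntervalIntegrable (fun s => (M s).mulVec (u n s)) volume x₀ t :=
        (cont_mulVec hMc (hucont _)).intervalIntegrable _ _
      have hdt : u (n + 2) t - u (n + 1) t =
          ∫ s in x₀..t, (M s).mulVec (u (n + 1) s - u n s) := by
        have h1 : u (n + 2) t - u (n + 1) t =
            (∫ s in x₀..t, (M s).mulVec (u (n + 1) s)) -
              ∫ s in x₀..t, (M s).mulVec (u n s) := by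
          rw [husucc (n + 1), husucc n]
          exact add_sub_add_left_eq_sub _ _ _
        rw [h1, ← intervalIntegral.integral_sub hint1 hint0]
        exact intervalIntegral.integral_congr fun s _ => (Matrix.mulVec_sub _ _ _).symm
      rw [hdt]
      have hgint : IntervalIntegrable
          (fun s => K * (‖c‖ * (K * |s - x₀|) ^ (n + 1) / (n + 1).factorial)) volume x₀ t := by
        apply Continuous.intervalIntegrable
        fun_prop
      have hae : ∀ᵐ s ∂volume.restrict (Set.uIoc x₀ t),
          ‖(M s).mulVec (u (n + 1) s - u n s)‖ ≤
            K * (‖c‖ * (K * |s - x₀|) ^ (n + 1) / (n + 1).factorial) := by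
        refine (MeasureTheory.ae_restrict_iff' measurableSet_uIoc).mpr
          (MeasureTheory.ae_of_all _ fun s hs => ?_)
        have hsI := uIoc_subset_Icc' hT ht hs
        exact (norm_mulVec_le _ _).trans
          (mul_le_mul (hKb s hsI) (ih s hsI) (norm_nonneg _) hK)
      refine (intervalIntegral.norm_integral_le_abs_of_norm_le hae hgint).trans ?_
      have hfun : (fun s => K * (‖c‖ * (K * |s - x₀|) ^ (n + 1) / (n + 1).factorial)) =
          fun s => (K * (‖c‖ * K ^ (n + 1) / (n + 1).factorial)) * |s - x₀| ^ (n + 1) := by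
        funext s; rw [mul_pow]; ring
      rw [hfun, intervalIntegral.integral_const_mul, abs_mul, abs_integral_abs_pow,
        abs_of_nonneg (by positivity)]
      refine le_of_eq ?_
      have hfact : (((n + 1) + 1).factorial : ℝ) = ((n : ℝ) + 1 + 1) * (n + 1).factorial := by
        rw [Nat.factorial_succ]; push_cast; ring
      rw [mul_pow, hfact]
      have hne : (((n + 1).factorial : ℝ)) ≠ 0 := by positivity
      field_simp
      push_cast
      ring
  -- summability of the bounding series
  have hsummable_aux : ∀ x : ℝ, Summable (fun n : ℕ => ‖c‖ * (x ^ (n + 1) / (n + 1).factorial)) := by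
    intro x
    exact (summable_nat_add_iff 1).mpr ((Real.summable_pow_div_factorial x).mul_left ‖c‖)
  have hboundT : ∀ K : ℝ, 0 ≤ K → ∀ T : ℝ, 0 ≤ T →
      (∀ s ∈ Set.Icc (x₀ - T) (x₀ + T), (∑ i, ∑ j, |M s i j|) ≤ K) →
      ∀ n, ∀ t ∈ Set.Icc (x₀ - T) (x₀ + T),
        ‖u (n + 1) t - u n t‖ ≤ ‖c‖ * ((K * T) ^ (n + 1) / (n + 1).factorial) := by
    intro K hK T hT hKb n t ht
    refine (key K hK T hT hKb n t ht).trans ?_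
    rw [mul_div_assoc]
    have habs : |t - x₀| ≤ T := abs_le_of_mem_Icc ht
    gcongr
  have hdsumm : ∀ t, Summable fun n => u (n + 1) t - u n t := by
    intro t
    obtain ⟨K, hK0, hKb⟩ := exists_bound hMc (x₀ - |t - x₀|) (x₀ + |t - x₀|)
    have htmem : t ∈ Set.Icc (x₀ - |t - x₀|) (x₀ + |t - x₀|) := mem_Icc_of_abs le_rfl
    exact Summable.of_norm_bounded (hsummable_aux (K * |t - x₀|))
      (fun n => hboundT K hK0 _ (abs_nonneg _) hKb n t htmem)
  set f : ℝ → Fin k → ℝ := fun t => c + ∑' n, (u (n + 1) t - u n t) with hf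
  have hpartial : ∀ n t, c + ∑ i ∈ Finset.range n, (u (i + 1) t - u i t) = u n t := by
    intro n t
    rw [Finset.sum_range_sub (fun i => u i t)]
    simp [hu0]
  have hUnifU : ∀ T : ℝ, 0 ≤ T →
      TendstoUniformlyOn u f Filter.atTop (Set.Icc (x₀ - T) (x₀ + T)) := by
    intro T hT0
    obtain ⟨K, hK0, hKb⟩ := exists_bound hMc (x₀ - T) (x₀ + T)
    have hUS := tendstoUniformlyOn_tsum_nat (hsummable_aux (K * T))
      (f := fun n t => u (n + 1) t - u n t) (s := Set.Icc (x₀ - T) (x₀ + T))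
      (fun n t ht => hboundT K hK0 T hT0 hKb n t ht)
    rw [Metric.tendstoUniformlyOn_iff] at hUS ⊢
    intro ε hε
    filter_upwards [hUS ε hε] with N hN t ht
    have h1 := hN t ht
    have h2 : dist (f t) (u N t) =
        dist (∑' n, (u (n + 1) t - u n t)) (∑ n ∈ Finset.range N, (u (n + 1) t - u n t)) := by
      rw [← hpartial N t, hf]
      simp only
      rw [dist_add_left]
    rwa [h2]
  have hfcont : Continuous f := by
    rw [continuous_iff_continuousAt]
    intro t
    have hT0 : (0:ℝ) ≤ |t - x₀| + 1 := by positivity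
    refine ((hUnifU _ hT0).continuousOn
      (Filter.Frequently.of_forall fun n => (hucont n).continuousOn)).continuousAt
      (Icc_mem_nhds ?_ ?_) <;>
      [skip; skip] <;> (have := abs_lt.mp (lt_add_one |t - x₀|); )
    · linarith [(abs_lt.mp (lt_of_lt_of_le (lt_add_one _) le_rfl : |t - x₀| < |t - x₀| + 1)).1]
    · linarith [(abs_lt.mp (lt_of_lt_of_le (lt_add_one _) le_rfl : |t - x₀| < |t - x₀| + 1)).2]
  have htendu : ∀ t, Filter.Tendsto (fun n => u n t) Filter.atTop (nhds (f t)) := by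
    intro t
    have h := ((hdsumm t).hasSum.tendsto_sum_nat).const_add c
    exact h.congr fun n => hpartial n t
  have hfeq : ∀ t, f t = c + ∫ s in x₀..t, (M s).mulVec (f s) := by
    intro t
    set T : ℝ := |t - x₀| with hT
    have hT0 : 0 ≤ T := abs_nonneg _
    obtain ⟨K, hK0, hKb⟩ := exists_bound hMc (x₀ - T) (x₀ + T)
    have h1 : Filter.Tendsto (fun n => u (n + 1) t) Filter.atTop (nhds (f t)) :=
      (htendu t).comp (Filter.tendsto_add_atTop_nat 1)
    have h2 : Filter.Tendsto (fun n => ∫ s in x₀..t, (M s).mulVec (u n s)) Filter.atTop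
        (nhds (∫ s in x₀..t, (M s).mulVec (f s))) := by
      rw [Metric.tendsto_atTop]
      intro ε hε
      have hKT1 : (0:ℝ) < K * T + 1 := by positivity
      set ε' : ℝ := ε / (K * T + 1) with hε'
      have hε'0 : 0 < ε' := div_pos hε hKT1
      obtain ⟨N, hN⟩ := Filter.eventually_atTop.mp
        (Metric.tendstoUniformlyOn_iff.mp (hUnifU T hT0) ε' hε'0)
      refine ⟨N, fun n hn => ?_⟩
      have hb : ∀ s ∈ Set.uIoc x₀ t,
          ‖(M s).mulVec (u n s) - (M s).mulVec (f s)‖ ≤ K * ε' := by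
        intro s hs
        have hsI := uIoc_subset_Icc' hT0 (mem_Icc_of_abs le_rfl) hs
        rw [← Matrix.mulVec_sub]
        refine (norm_mulVec_le _ _).trans ?_
        have h' : ‖u n s - f s‖ ≤ ε' := by
          rw [← dist_eq_norm, dist_comm]
          exact (hN n hn s hsI).le
        exact mul_le_mul (hKb s hsI) h' (norm_nonneg _) hK0
      have hcalc : dist (∫ s in x₀..t, (M s).mulVec (u n s))
          (∫ s in x₀..t, (M s).mulVec (f s)) ≤ (K * ε') * |t - x₀| := by
        rw [dist_eq_norm, ← intervalIntegral.integral_sub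
          ((cont_mulVec hMc (hucont n)).intervalIntegrable _ _)
          ((cont_mulVec hMc hfcont).intervalIntegrable _ _)]
        exact intervalIntegral.norm_integral_le_of_norm_le_const hb
      refine lt_of_le_of_lt hcalc ?_
      calc K * ε' * |t - x₀| = K * T * ε' := by rw [← hT]; ring
        _ < (K * T + 1) * ε' := by nlinarith
        _ = ε := by rw [hε']; field_simp
    have h2' : Filter.Tendsto (fun n => u (n + 1) t) Filter.atTop
        (nhds (c + ∫ s in x₀..t, (M s).mulVec (f s))) := by
      refine (h2.const_add c).congr fun n => ?_
      exact (congrFun (husucc n) t).symm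
    exact tendsto_nhds_unique h1 h2'
  have hMfcont : Continuous fun s => (M s).mulVec (f s) := cont_mulVec hMc hfcont
  have hderiv : ∀ t, HasDerivAt f ((M t).mulVec (f t)) t := by
    intro t
    have hFTC : HasDerivAt (fun t => c + ∫ s in x₀..t, (M s).mulVec (f s))
        ((M t).mulVec (f t)) t := by
      refine HasDerivAt.const_add c ?_
      exact intervalIntegral.integral_hasDerivAt_right
        (hMfcont.intervalIntegrable _ _)
        (hMfcont.stronglyMeasurableAtFilter _ _)
        hMfcont.continuousAt
    exact hFTC.congr_of_eventuallyEq (Filter.Eventually.of_forall hfeq)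
  have hdiff : Differentiable ℝ f := fun t => (hderiv t).differentiableAt
  have hderiv_eq : deriv f = fun t => (M t).mulVec (f t) := funext fun t => (hderiv t).deriv
  have hsm : ∀ n : ℕ, ContDiff ℝ (n : ℕ) f := by
    intro n
    induction n with
    | zero => exact contDiff_zero.mpr hfcont
    | succ n ih =>
      have hstep : ContDiff ℝ (n : ℕ) (deriv f) := by
        rw [hderiv_eq]
        refine contDiff_pi.mpr fun i => ?_
        simp only [Matrix.mulVec, dotProduct]
        refine ContDiff.sum fun j _ => ContDiff.mul ?_ ?_
        · exact (hM i j).of_le (by exact_mod_cast le_top)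
        · exact (contDiff_pi.mp ih) j
      have h := contDiff_succ_iff_deriv.mpr
        ⟨hdiff, fun h' => by simp at h', hstep⟩
      exact_mod_cast h
  refine ⟨f, ?_, hderiv, ?_⟩
  · exact contDiff_infty.mpr hsm
  · rw [hfeq x₀]
    simp

end ODE2

section ODE3
set_option maxHeartbeats 1000000
variable {k : ℕ} {M : ℝ → Matrix (Fin k) (Fin k) ℝ}

theorem linear_ODE_unique (hMc : ∀ i j, Continuous fun t => M t i j) (x₀ : ℝ)
    {f g : ℝ → Fin k → ℝ}
    (hf : ∀ t, HasDerivAt f ((M t).mulVec (f t)) t)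
    (hg : ∀ t, HasDerivAt g ((M t).mulVec (g t)) t)
    (h0 : f x₀ = g x₀) : f = g := by
  funext t
  set R : ℝ := |t - x₀| + 1 with hR
  have hR1 : (1:ℝ) ≤ R := by rw [hR]; linarith [abs_nonneg (t - x₀)]
  set a : ℝ := x₀ - R with ha
  set b : ℝ := x₀ + R with hb
  obtain ⟨K, hK0, hKb⟩ := exists_bound hMc a b
  set proj : ℝ → ℝ := fun s => max a (min s b) with hproj
  have hprojmem : ∀ s, proj s ∈ Set.Icc a b := by
    intro s
    constructor
    · exact le_max_left _ _
    · rw [hproj]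
      simp only [max_le_iff]
      constructor
      · linarith
      · exact min_le_right _ _
  have hprojeq : ∀ s ∈ Set.Icc a b, proj s = s := by
    intro s hs
    rw [hproj]
    simp only
    rw [min_eq_left hs.2, max_eq_right hs.1]
  set v : ℝ → (Fin k → ℝ) → (Fin k → ℝ) := fun s x => (M (proj s)).mulVec x with hv
  have hlip : ∀ s, LipschitzOnWith K.toNNReal (v s) Set.univ := by
    intro s
    refine LipschitzWith.lipschitzOnWith ?_
    refine LipschitzWith.of_dist_le_mul fun x y => ?_
    rw [dist_eq_norm, dist_eq_norm, hv]
    simp only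
    rw [← Matrix.mulVec_sub]
    refine (norm_mulVec_le _ _).trans ?_
    refine mul_le_mul_of_nonneg_right ?_ (norm_nonneg _)
    refine (hKb _ (hprojmem s)).trans ?_
    rw [Real.coe_toNNReal _ hK0]
  have hmem : x₀ ∈ Set.Ioo a b := by
    constructor <;> [rw [ha]; rw [hb]] <;> linarith
  have hfc : ContinuousOn f (Set.Icc a b) :=
    (fun s _ => (hf s).differentiableAt.continuousAt.continuousWithinAt)
  have hgc : ContinuousOn g (Set.Icc a b) :=
    (fun s _ => (hg s).differentiableAt.continuousAt.continuousWithinAt)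
  have hfd : ∀ s ∈ Set.Ioo a b, HasDerivAt f (v s (f s)) s := by
    intro s hs
    have h1 : v s (f s) = (M s).mulVec (f s) := by
      show (M (proj s)).mulVec (f s) = _
      rw [hprojeq s (Set.Ioo_subset_Icc_self hs)]
    rw [h1]
    exact hf s
  have hgd : ∀ s ∈ Set.Ioo a b, HasDerivAt g (v s (g s)) s := by
    intro s hs
    have h1 : v s (g s) = (M s).mulVec (g s) := by
      show (M (proj s)).mulVec (g s) = _
      rw [hprojeq s (Set.Ioo_subset_Icc_self hs)]
    rw [h1]
    exact hg s
  have heq := ODE_solution_unique_of_mem_Icc (s := fun _ => Set.univ) (fun s _ => hlip s) hmem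
    hfc hfd (fun _ _ => Set.mem_univ _) hgc hgd (fun _ _ => Set.mem_univ _) h0
  refine heq ?_
  refine ⟨?_, ?_⟩ <;> [rw [ha]; rw [hb]] <;>
    [linarith [abs_le.mp (le_of_lt (lt_add_one |t - x₀|))]; skip]
  · linarith [(abs_le.mp (le_of_lt (lt_add_one |t - x₀|))).2]

end ODE3

/-- solutions of the first-order linear system `Dψ = Γψ` on the
superline are in bijection with their even initial values `ψ⁰(x₀) ∈ ℝ^k`. -/
theorem solution_space_evaluation_bijective
    (k : ℕ) (hk : 1 ≤ k) (Γ : Matrix (Fin k) (Fin k) SuperA) (x₀ : ℝ) :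
    Function.Bijective
      (fun ψ : {ψ : Fin k → SuperA // ∀ i, D (ψ i) = ∑ j, Γ i j * ψ j} =>
        fun i : Fin k => ((fst (ψ.1 i) : SmoothR) : ℝ → ℝ) x₀) := by
  classical
  set A : Fin k → Fin k → SmoothR := fun i j => fst (Γ i j) with hA
  set B : Fin k → Fin k → SmoothR := fun i j => snd (Γ i j) with hB
  set Csm : Fin k → Fin k → SmoothR := fun i j => (∑ l, A i l * A l j) + B i j with hC
  set Mmat : ℝ → Matrix (Fin k) (Fin k) ℝ := fun t i j => (Csm i j : ℝ → ℝ) t with hMmat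
  have hM : ∀ i j, ContDiff ℝ (⊤ : ℕ∞) fun t => Mmat t i j := fun i j => (Csm i j).2
  have hMc : ∀ i j, Continuous fun t => Mmat t i j := fun i j => (hM i j).continuous
  have hE1 : ∀ (ψ : Fin k → SuperA), (∀ i, D (ψ i) = ∑ j, Γ i j * ψ j) →
      ∀ i, snd (ψ i) = ∑ j, A i j * fst (ψ j) := by
    intro ψ hψ i
    have h := congrArg TrivSqZeroExt.fst (hψ i)
    simpa [D, TrivSqZeroExt.fst_sum, TrivSqZeroExt.fst_mul] using h
  have hE2 : ∀ (ψ : Fin k → SuperA), (∀ i, D (ψ i) = ∑ j, Γ i j * ψ j) →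
      ∀ i, derivSm (fst (ψ i)) = ∑ j, Csm i j * fst (ψ j) := by
    intro ψ hψ i
    have h := congrArg TrivSqZeroExt.snd (hψ i)
    simp only [D, LinearMap.coe_mk, AddHom.coe_mk, TrivSqZeroExt.snd_add,
      TrivSqZeroExt.snd_inl, TrivSqZeroExt.snd_inr, zero_add, TrivSqZeroExt.snd_sum,
      TrivSqZeroExt.snd_mul, op_smul_eq_smul, smul_eq_mul] at h
    rw [h]
    have hsub : ∀ j, snd (ψ j) = ∑ l, A j l * fst (ψ l) := hE1 ψ hψ
    have step1 : ∑ j, (fst (Γ i j) * snd (ψ j) + fst (ψ j) * snd (Γ i j)) =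
        ∑ j, (A i j * (∑ l, A j l * fst (ψ l)) + B i j * fst (ψ j)) := by
      refine Finset.sum_congr rfl fun j _ => ?_
      rw [hsub j]
      simp only [hB]
      ring
    rw [step1, ← sum_shuffle A B (fun j => fst (ψ j)) i]
  have hFwd : ∀ (ψ : Fin k → SuperA), (∀ i, D (ψ i) = ∑ j, Γ i j * ψ j) →
      ∀ t, HasDerivAt (fun t i => ((fst (ψ i) : SmoothR) : ℝ → ℝ) t)
        ((Mmat t).mulVec (fun i => ((fst (ψ i) : SmoothR) : ℝ → ℝ) t)) t := by
    intro ψ hψ t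
    rw [hasDerivAt_pi]
    intro i
    have hval : deriv ((fst (ψ i) : SmoothR) : ℝ → ℝ) t =
        (Mmat t).mulVec (fun i => ((fst (ψ i) : SmoothR) : ℝ → ℝ) t) i := by
      calc deriv ((fst (ψ i) : SmoothR) : ℝ → ℝ) t
          = ((derivSm (fst (ψ i)) : SmoothR) : ℝ → ℝ) t := rfl
        _ = ((∑ j, Csm i j * fst (ψ j) : SmoothR) : ℝ → ℝ) t := by rw [hE2 ψ hψ i]
        _ = ∑ j, (Csm i j : ℝ → ℝ) t * ((fst (ψ j) : SmoothR) : ℝ → ℝ) t := by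
            rw [AddSubmonoidClass.coe_finset_sum, Finset.sum_apply]
            exact Finset.sum_congr rfl fun j _ => by rw [MulMemClass.coe_mul]; rfl
        _ = (Mmat t).mulVec (fun i => ((fst (ψ i) : SmoothR) : ℝ → ℝ) t) i := by
            simp [Matrix.mulVec, dotProduct]; rfl
    exact hval ▸ ((SmoothR.differentiable (fst (ψ i))) t).hasDerivAt
  constructor
  · rintro ⟨ψ, hψ⟩ ⟨φ, hφ⟩ h
    simp only at h
    have hFeq := linear_ODE_unique hMc x₀ (hFwd ψ hψ) (hFwd φ hφ) h
    have hfst : ∀ i, fst (ψ i) = fst (φ i) := fun i =>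
      Subtype.ext (funext fun t => congrFun (congrFun hFeq t) i)
    refine Subtype.ext (funext fun i => TrivSqZeroExt.ext (hfst i) ?_)
    rw [hE1 ψ hψ i, hE1 φ hφ i]
    exact Finset.sum_congr rfl fun j _ => by rw [hfst j]
  · intro c
    obtain ⟨f, hsm, hfd, hfx₀⟩ := linear_ODE_exists (M := Mmat) hM x₀ c
    set fS : Fin k → SmoothR := fun i => ⟨fun t => f t i, contDiff_pi.mp hsm i⟩ with hfS
    set gS : Fin k → SmoothR := fun i => ∑ j, A i j * fS j with hgS
    set ψ : Fin k → SuperA := fun i => inl (fS i) + inr (gS i) with hψdef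
    have hfstψ : ∀ i, fst (ψ i) = fS i := by
      intro i; simp [hψdef]
    have hsndψ : ∀ i, snd (ψ i) = gS i := by
      intro i; simp [hψdef]
    have hder : ∀ i, derivSm (fS i) = ∑ j, Csm i j * fS j := by
      intro i
      apply Subtype.ext; funext t
      have h1 := (hasDerivAt_pi.mp (hfd t) i).deriv
      calc (derivSm (fS i) : ℝ → ℝ) t = deriv (fun t => f t i) t := rfl
        _ = (Mmat t).mulVec (f t) i := h1
        _ = ∑ j, (Csm i j : ℝ → ℝ) t * f t j := by
            simp [Matrix.mulVec, dotProduct]; rfl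
        _ = ((∑ j, Csm i j * fS j : SmoothR) : ℝ → ℝ) t := by
            rw [AddSubmonoidClass.coe_finset_sum, Finset.sum_apply]
            exact Finset.sum_congr rfl fun j _ => by rw [MulMemClass.coe_mul]; rfl
    have hsol : ∀ i, D (ψ i) = ∑ j, Γ i j * ψ j := by
      intro i
      refine TrivSqZeroExt.ext ?_ ?_
      · simp only [D, LinearMap.coe_mk, AddHom.coe_mk, TrivSqZeroExt.fst_add,
          TrivSqZeroExt.fst_inl, TrivSqZeroExt.fst_inr, add_zero, TrivSqZeroExt.fst_sum,
          TrivSqZeroExt.fst_mul, hsndψ, hfstψ]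
        rfl
      · simp only [D, LinearMap.coe_mk, AddHom.coe_mk, TrivSqZeroExt.snd_add,
          TrivSqZeroExt.snd_inl, TrivSqZeroExt.snd_inr, zero_add, TrivSqZeroExt.snd_sum,
          TrivSqZeroExt.snd_mul, op_smul_eq_smul, smul_eq_mul, hsndψ, hfstψ]
        rw [hder i]
        have := sum_shuffle A B fS i
        rw [hC]
        refine this.trans (Finset.sum_congr rfl fun j _ => ?_)
        rw [hgS]
        ring
    refine ⟨⟨ψ, hsol⟩, ?_⟩
    funext i
    show ((fst (ψ i) : SmoothR) : ℝ → ℝ) x₀ = c i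
    rw [hfstψ i]
    show f x₀ i = c i
    rw [hfx₀]

end
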